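/- Let T ∈ ℕ and consider a deterministic array (p_t, r_t, c_t)_{t=0}^{T} with p_t ∈ ℝ^L_{++}, interest rates r_t > −1, and c_t ∈ ℝ^L_+ \ {0}, and set ρ_0 = p_0 and ρ_t = p_t / ∏_{i=1}^{t} (1+r_i) for t ≥ 1. The array is ED-rationalizable if and only if there exist a concave, locally nonsatiated, continuous utility function u : ℝ^L_+ → ℝ, a discount factor d ∈ (0,1], and for each t ∈ {0,…,T} a supergradient ξ_t ∈ ∂u(c_t) such that d^t ξ_{t,j} ≤ ρ_{t,j} for every coordinate j = 1,…,L, with equality d^t ξ_{t,j} = ρ_{t,j} whenever c_{t,j} ≠ 0. -/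

import Mathlib

open MeasureTheory Filter Topology Finset

noncomputable section

/-- Vectors in ℝ^L with the Euclidean norm. -/
abbrev Vec (L : ℕ) := EuclideanSpace ℝ (Fin L)

/-- Inner product (dot product) of two vectors. -/
def dotp {L : ℕ} (p c : Vec L) : ℝ := ∑ j, p j * c j

/-- Componentwise nonnegative vectors: the set ℝ^L_+. -/
def NonnegV {L : ℕ} (c : Vec L) : Prop := ∀ j, 0 ≤ c j

/-- The consumption space ℝ^L_+ \ {0}. -/
def ConsV {L : ℕ} (c : Vec L) : Prop := NonnegV c ∧ c ≠ 0

/-- Componentwise strictly positive vectors: the set ℝ^L_{++}. -/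
def PosV {L : ℕ} (p : Vec L) : Prop := ∀ j, 0 < p j

/-- Concavity of u on its domain ℝ^L_+. -/
def IsConcaveNN {L : ℕ} (u : Vec L → ℝ) : Prop :=
  ∀ c c' : Vec L, NonnegV c → NonnegV c' → ∀ a : ℝ, 0 ≤ a → a ≤ 1 →
    a * u c + (1 - a) * u c' ≤ u (a • c + (1 - a) • c')

/-- Local nonsatiation of u on its domain ℝ^L_+. -/
def LocallyNonsatiatedNN {L : ℕ} (u : Vec L → ℝ) : Prop :=
  ∀ c : Vec L, NonnegV c → ∀ ε : ℝ, 0 < ε →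
    ∃ c' : Vec L, NonnegV c' ∧ ‖c' - c‖ < ε ∧ u c < u c'

/-- Continuity of u on its domain ℝ^L_+. -/
def ContinuousNN {L : ℕ} (u : Vec L → ℝ) : Prop := ContinuousOn u {c | NonnegV c}

/-- A concave, locally nonsatiated, continuous utility function on ℝ^L_+. -/
def NiceUtility {L : ℕ} (u : Vec L → ℝ) : Prop :=
  IsConcaveNN u ∧ LocallyNonsatiatedNN u ∧ ContinuousNN u

/-- ξ is a supergradient of u at c: u(c') − u(c) ≤ ξᵀ(c'−c) for all c' ∈ ℝ^L_+ \ {0}. -/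
def Supergrad {L : ℕ} (u : Vec L → ℝ) (c ξ : Vec L) : Prop :=
  ∀ c' : Vec L, ConsV c' → u c' - u c ≤ dotp ξ (c' - c)

/-- The compounding factor ∏_{i=1}^{t} (1 + r_i). -/
def Dfac (r : ℕ → ℝ) (t : ℕ) : ℝ := ∏ i ∈ Finset.Icc 1 t, (1 + r i)

/-- Effective (discounted) prices ρ_t = p_t / ∏_{i=1}^{t}(1 + r_i); in particular ρ_0 = p_0. -/
def effP {L T : ℕ} (r : ℕ → ℝ) (p : Fin (T + 1) → Vec L) (t : Fin (T + 1)) : Vec L :=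
  (Dfac r (t : ℕ))⁻¹ • p t

/-- ED-rationalizability: there exist a nice utility u, a discount factor d ∈ (0,1],
incomes y_t > 0, and initial assets a₀ ≥ 0 such that (c_t) maximizes Σ_t d^t u(z_t)
over nonnegative streams satisfying the intertemporal budget constraint
Σ_t ρ_tᵀ z_t = Σ_{t=1}^{T} y_t / ∏_{i=1}^{t}(1+r_i) + a₀. -/
def EDRat {L T : ℕ} (r : ℕ → ℝ) (p c : Fin (T + 1) → Vec L) : Prop :=
  ∃ u : Vec L → ℝ, ∃ d : ℝ, ∃ y : Fin (T + 1) → ℝ, ∃ a₀ : ℝ,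
    NiceUtility u ∧ 0 < d ∧ d ≤ 1 ∧ (∀ t, 0 < y t) ∧ 0 ≤ a₀ ∧
    (∑ t : Fin (T + 1), dotp (effP r p t) (c t)) =
      (∑ t : Fin (T + 1), if t = 0 then 0 else y t / Dfac r (t : ℕ)) + a₀ ∧
    ∀ z : Fin (T + 1) → Vec L, (∀ t, NonnegV (z t)) →
      (∑ t : Fin (T + 1), dotp (effP r p t) (z t)) =
        (∑ t : Fin (T + 1), if t = 0 then 0 else y t / Dfac r (t : ℕ)) + a₀ →
      (∑ t : Fin (T + 1), d ^ (t : ℕ) * u (z t)) ≤ ∑ t : Fin (T + 1), d ^ (t : ℕ) * u (c t)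

/-! The "if" direction is the first-order sufficiency of supergradients: on the budget
hyperplane, `∑ dᵗ (u zₜ - u cₜ) ≤ ∑ ρₜ ⬝ (zₜ - cₜ) = 0`. For the "only if" direction, the
discounted utility `U` is concave on nonnegative streams and `c` maximizes it on the hyperplane
`cost = W`. Mixing a cheaper and a dearer stream into one of cost exactly `W` shows that every
slope of `U` above `W` is bounded by every slope below `W`, so a Lagrange multiplier `μ` with
`U z ≤ U c + μ (cost z - W)` exists. By continuity, compactness of budget sets and local
nonsatiation, `c` also maximizes `U` on `cost ≤ W`, which makes `μ` positive. Varying a single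
period then shows that `ρₜ / dᵗ` is a supergradient of `u / μ` at `cₜ`. -/

open scoped RealInnerProductSpace

section Vectors

variable {L : ℕ}

lemma dotp_eq_inner (p c : Vec L) : dotp p c = ⟪p, c⟫ := by
  simp [dotp, PiLp.inner_apply, mul_comm]

lemma dotp_nonneg {p c : Vec L} (hp : ∀ j, 0 ≤ p j) (hc : NonnegV c) : 0 ≤ dotp p c :=
  Finset.sum_nonneg fun j _ => mul_nonneg (hp j) (hc j)

lemma dotp_pos {p c : Vec L} (hp : PosV p) (hc : ConsV c) : 0 < dotp p c := by
  obtain ⟨j, hj⟩ : ∃ j, c j ≠ 0 := by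
    by_contra! h
    exact hc.2 (by ext j; exact h j)
  exact Finset.sum_pos' (fun i _ => mul_nonneg (hp i).le (hc.1 i))
    ⟨j, Finset.mem_univ j, mul_pos (hp j) ((hc.1 j).lt_of_ne (Ne.symm hj))⟩

lemma ConsV.smul {c : Vec L} (hc : ConsV c) {ε : ℝ} (hε : 0 < ε) : ConsV (ε • c) :=
  ⟨fun j => by simpa using mul_nonneg hε.le (hc.1 j), smul_ne_zero hε.ne' hc.2⟩

lemma convex_nonnegV : Convex ℝ {x : Vec L | NonnegV x} := by
  intro x hx y hy a b ha hb _ j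
  simp only [PiLp.add_apply, PiLp.smul_apply, smul_eq_mul]
  exact add_nonneg (mul_nonneg ha (hx j)) (mul_nonneg hb (hy j))

lemma IsConcaveNN.concaveOn {u : Vec L → ℝ} (hu : IsConcaveNN u) :
    ConcaveOn ℝ {x | NonnegV x} u :=
  ⟨convex_nonnegV, fun x hx y hy a b ha _ hab => by
    obtain rfl : b = 1 - a := by linarith
    exact hu x y hx hy a ha (by linarith)⟩

lemma LocallyNonsatiatedNN.frequently_lt {u : Vec L → ℝ} (hu : LocallyNonsatiatedNN u)
    {c : Vec L} (hc : NonnegV c) : ∃ᶠ c' in 𝓝 c, NonnegV c' ∧ u c < u c' :=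
  Metric.nhds_basis_ball.frequently_iff.2 fun ε hε => by
    obtain ⟨c', hc', hdist, hlt⟩ := hu c hc ε hε
    exact ⟨c', by rwa [Metric.mem_ball, dist_eq_norm], hc', hlt⟩

lemma NiceUtility.div_const {u : Vec L → ℝ} (hu : NiceUtility u) {k : ℝ} (hk : 0 < k) :
    NiceUtility (fun x => u x / k) := by
  obtain ⟨hconc, hns, hcont⟩ := hu
  refine ⟨fun c c' hc hc' a ha0 ha1 => ?_, fun c hc ε hε => ?_, hcont.div_const k⟩
  · calc a * (u c / k) + (1 - a) * (u c' / k) = (a * u c + (1 - a) * u c') / k := by ring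
      _ ≤ u (a • c + (1 - a) • c') / k := by gcongr; exact hconc c c' hc hc' a ha0 ha1
  · obtain ⟨c', hc', hdist, hlt⟩ := hns c hc ε hε
    exact ⟨c', hc', hdist, div_lt_div_of_pos_right hlt hk⟩

lemma Supergrad.sub_le_of_nonneg {u : Vec L → ℝ} {c ξ z : Vec L} (h : Supergrad u c ξ)
    (hu : ContinuousNN u) (hc : ConsV c) (hz : NonnegV z) : u z - u c ≤ dotp ξ (z - c) := by
  rcases eq_or_ne z 0 with rfl | hz0
  · -- `Supergrad` only tests points other than `0`: reach `0` as the limit of `ε • c`, `ε → 0⁺`.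
    have hsmul : Tendsto (fun ε : ℝ => ε • c) (𝓝[>] 0) (𝓝 0) := by
      simpa using
        (tendsto_id.mono_left nhdsWithin_le_nhds : Tendsto id (𝓝[>] (0 : ℝ)) _).smul_const c
    have hlim : Tendsto (fun ε : ℝ => ε • c) (𝓝[>] 0) (𝓝[{x | NonnegV x}] 0) :=
      tendsto_nhdsWithin_iff.2 ⟨hsmul, eventually_nhdsWithin_of_forall fun ε hε =>
        (hc.smul hε).1⟩
    have hright :
        Tendsto (fun ε : ℝ => dotp ξ (ε • c - c)) (𝓝[>] 0) (𝓝 (dotp ξ (0 - c))) := by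
      simp only [dotp_eq_inner]
      exact ((innerSL ℝ ξ).continuous.tendsto _).comp (hsmul.sub_const c)
    exact le_of_tendsto_of_tendsto (((hu 0 fun _ => le_rfl).tendsto.comp hlim).sub_const _)
      hright (eventually_nhdsWithin_of_forall fun ε hε => h _ (hc.smul hε))
  · exact h z ⟨hz, hz0⟩

end Vectors

section Lagrange

variable {E : Type*} [AddCommGroup E] [Module ℝ E] {D : Set E} {U : E → ℝ} {C : E →ₗ[ℝ] ℝ} {c : E}

lemma ConcaveOn.slope_above_le_slope_below (hU : ConcaveOn ℝ D U)
    (hmax : ∀ z ∈ D, C z = C c → U z ≤ U c) {z₁ z₂ : E} (h₁ : z₁ ∈ D) (h₂ : z₂ ∈ D)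
    (hlt₁ : C z₁ < C c) (hlt₂ : C c < C z₂) :
    (U z₂ - U c) / (C z₂ - C c) ≤ (U c - U z₁) / (C c - C z₁) := by
  have hδ : 0 < C z₂ - C z₁ := by linarith
  set a := (C z₂ - C c) / (C z₂ - C z₁)
  set b := (C c - C z₁) / (C z₂ - C z₁)
  have ha : 0 ≤ a := div_nonneg (by linarith) hδ.le
  have hb : 0 ≤ b := div_nonneg (by linarith) hδ.le
  have hab : a + b = 1 := by
    rw [← add_div, div_eq_one_iff_eq hδ.ne']
    ring
  have hmix : a * U z₁ + b * U z₂ ≤ U c := by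
    refine (hU.2 h₁ h₂ ha hb hab).trans (hmax _ (hU.1 h₁ h₂ ha hb hab) ?_)
    simp only [map_add, map_smul, smul_eq_mul, a, b]
    field_simp
    ring
  have key : (C z₂ - C c) * U z₁ + (C c - C z₁) * U z₂ ≤ (C z₂ - C z₁) * U c := by
    have := mul_le_mul_of_nonneg_left hmix hδ.le
    simp only [a, b] at this
    field_simp at this
    linarith
  rw [div_le_div_iff₀ (by linarith) (by linarith)]
  linarith

theorem ConcaveOn.exists_lagrange_multiplier (hU : ConcaveOn ℝ D U)
    (hmax : ∀ z ∈ D, C z = C c → U z ≤ U c) (hbelow : ∃ z ∈ D, C z < C c)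
    (habove : ∃ z ∈ D, C c < C z ∧ U c < U z) :
    ∃ μ > 0, ∀ z ∈ D, U z ≤ U c + μ * (C z - C c) := by
  obtain ⟨z₀, hz₀, hz₀c⟩ := hbelow
  obtain ⟨z₁, hz₁, hz₁c, hz₁U⟩ := habove
  set slopes := (fun z => (U z - U c) / (C z - C c)) '' {z | z ∈ D ∧ C c < C z}
  have hslope_le {z} (hz : z ∈ D) (hzc : C z < C c) :
      ∀ s ∈ slopes, s ≤ (U c - U z) / (C c - C z) := by
    rintro _ ⟨z', ⟨hz', hz'c⟩, rfl⟩
    exact hU.slope_above_le_slope_below hmax hz hz' hzc hz'c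
  have hbdd : BddAbove slopes := ⟨_, hslope_le hz₀ hz₀c⟩
  have hmem : (U z₁ - U c) / (C z₁ - C c) ∈ slopes := ⟨z₁, ⟨hz₁, hz₁c⟩, rfl⟩
  refine ⟨sSup slopes, (div_pos (by linarith) (by linarith)).trans_le (le_csSup hbdd hmem),
    fun z hz => ?_⟩
  rcases lt_trichotomy (C z) (C c) with hlt | heq | hgt
  · have := csSup_le ⟨_, hmem⟩ (hslope_le hz hlt)
    rw [le_div_iff₀ (sub_pos.2 hlt)] at this
    linarith
  · rw [heq, sub_self, mul_zero, add_zero]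
    exact hmax z hz heq
  · have := le_csSup hbdd ⟨z, ⟨hz, hgt⟩, rfl⟩
    rw [div_le_iff₀ (sub_pos.2 hgt)] at this
    linarith

end Lagrange

theorem exists_budget_exhausting_maximizer {E : Type*} [TopologicalSpace E] {D : Set E}
    {U C : E → ℝ} {W : ℝ} (hK : IsCompact {z | z ∈ D ∧ C z ≤ W}) (hne : ∃ z ∈ D, C z ≤ W)
    (hU : ContinuousOn U {z | z ∈ D ∧ C z ≤ W}) (hC : Continuous C)
    (hns : ∀ z ∈ D, ∃ᶠ z' in 𝓝 z, z' ∈ D ∧ U z < U z') :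
    ∃ z ∈ D, C z = W ∧ ∀ z' ∈ D, C z' ≤ W → U z' ≤ U z := by
  obtain ⟨z, ⟨hzD, hzW⟩, hmax⟩ := hK.exists_isMaxOn hne hU
  refine ⟨z, hzD, hzW.eq_of_not_lt fun hlt => ?_, fun z' hz' hz'W => hmax ⟨hz', hz'W⟩⟩
  obtain ⟨z', ⟨hz'D, hlt'⟩, hz'W⟩ :=
    ((hns z hzD).and_eventually (hC.continuousAt.eventually (gt_mem_nhds hlt))).exists
  exact (hmax ⟨hz'D, hz'W.le⟩).not_gt hlt'

section Streams

variable {L : ℕ} {ι : Type*}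

def nonnegStreams : Set (ι → Vec L) := {z | ∀ t, NonnegV (z t)}

lemma zero_mem_nonnegStreams : (0 : ι → Vec L) ∈ nonnegStreams := fun _ _ => le_rfl

lemma update_mem_nonnegStreams [DecidableEq ι] {z : ι → Vec L} (hz : z ∈ nonnegStreams)
    {x : Vec L} (hx : NonnegV x) (t : ι) : Function.update z t x ∈ nonnegStreams := by
  intro s
  rcases eq_or_ne s t with rfl | hs
  · simpa using hx
  · simpa [hs] using hz s

variable [Fintype ι]

def weightedUtility (w : ι → ℝ) (u : Vec L → ℝ) (z : ι → Vec L) : ℝ := ∑ t, w t * u (z t)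

def cost (ρ : ι → Vec L) : (ι → Vec L) →L[ℝ] ℝ :=
  ∑ t, (innerSL ℝ (ρ t)).comp (ContinuousLinearMap.proj t)

lemma cost_apply (ρ z : ι → Vec L) : cost ρ z = ∑ t, dotp (ρ t) (z t) := by
  simp [cost, dotp_eq_inner]

lemma cost_pos [Nonempty ι] {ρ c : ι → Vec L} (hρ : ∀ t, PosV (ρ t)) (hc : ∀ t, ConsV (c t)) :
    0 < cost ρ c := by
  rw [cost_apply]
  exact Finset.sum_pos (fun t _ => dotp_pos (hρ t) (hc t)) Finset.univ_nonempty

lemma isCompact_budgetSet {ρ : ι → Vec L} (hρ : ∀ t, PosV (ρ t)) (w : ℝ) :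
    IsCompact {z | z ∈ nonnegStreams ∧ cost ρ z ≤ w} := by
  have hclosed : IsClosed {z : ι → Vec L | z ∈ nonnegStreams ∧ cost ρ z ≤ w} := by
    refine IsClosed.inter ?_ (isClosed_le (cost ρ).continuous continuous_const)
    simp only [nonnegStreams, NonnegV, Set.ofPred_forall]
    exact isClosed_iInter fun t => isClosed_iInter fun j =>
      isClosed_le continuous_const (by fun_prop)
  have hbox (t : ι) : IsCompact
      (EuclideanSpace.equiv (Fin L) ℝ ⁻¹' Set.Icc 0 (fun j => w / ρ t j)) :=
    (EuclideanSpace.equiv (Fin L) ℝ).toHomeomorph.isCompact_preimage.2 isCompact_Icc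
  refine (isCompact_univ_pi hbox).of_isClosed_subset hclosed
    fun z ⟨hz, hzw⟩ t _ => ⟨fun j => hz t j, fun j => ?_⟩
  rw [cost_apply] at hzw
  rw [le_div_iff₀ (hρ t j)]
  calc z t j * ρ t j = ρ t j * z t j := mul_comm _ _
    _ ≤ dotp (ρ t) (z t) := Finset.single_le_sum (f := fun j => ρ t j * z t j)
        (fun i _ => mul_nonneg (hρ t i).le (hz t i)) (Finset.mem_univ j)
    _ ≤ ∑ s, dotp (ρ s) (z s) := Finset.single_le_sum (f := fun s => dotp (ρ s) (z s))
        (fun s _ => dotp_nonneg (fun i => (hρ s i).le) (hz s)) (Finset.mem_univ t)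
    _ ≤ w := hzw

lemma concaveOn_weightedUtility {w : ι → ℝ} (hw : ∀ t, 0 ≤ w t) {u : Vec L → ℝ}
    (hu : ConcaveOn ℝ {x | NonnegV x} u) :
    ConcaveOn ℝ nonnegStreams (weightedUtility w u) := by
  refine ⟨fun x hx y hy a b ha hb hab t => convex_nonnegV (hx t) (hy t) ha hb hab,
    fun x hx y hy a b ha hb hab => ?_⟩
  simp only [weightedUtility, smul_eq_mul, Finset.mul_sum, ← Finset.sum_add_distrib]
  refine Finset.sum_le_sum fun t _ => ?_
  calc a * (w t * u (x t)) + b * (w t * u (y t))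
        = w t * (a • u (x t) + b • u (y t)) := by simp only [smul_eq_mul]; ring
    _ ≤ w t * u ((a • x + b • y) t) :=
        mul_le_mul_of_nonneg_left (hu.2 (hx t) (hy t) ha hb hab) (hw t)

lemma continuousOn_weightedUtility (w : ι → ℝ) {u : Vec L → ℝ} (hu : ContinuousNN u) :
    ContinuousOn (weightedUtility w u) nonnegStreams :=
  continuousOn_finsetSum _ fun t _ =>
    continuousOn_const.mul (hu.comp (continuous_apply t).continuousOn fun _ hz => hz t)

variable [DecidableEq ι]

lemma sum_apply_update {α β : Type*} [AddCommGroup β] (g : ι → α → β) (z : ι → α) (t : ι)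
    (x : α) : ∑ s, g s (Function.update z t x s) = ∑ s, g s (z s) + (g t x - g t (z t)) := by
  simp only [Function.apply_update (fun s => g s) z t x]
  rw [Finset.sum_update_of_mem (Finset.mem_univ t),
    Finset.sum_eq_add_sum_sdiff_singleton_of_mem (Finset.mem_univ t)]
  abel

lemma weightedUtility_update (w : ι → ℝ) (u : Vec L → ℝ) (z : ι → Vec L) (t : ι)
    (x : Vec L) : weightedUtility w u (Function.update z t x) =
      weightedUtility w u z + w t * (u x - u (z t)) := by
  rw [weightedUtility, sum_apply_update (fun s v => w s * u v), weightedUtility, mul_sub]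

lemma cost_update (ρ z : ι → Vec L) (t : ι) (x : Vec L) :
    cost ρ (Function.update z t x) = cost ρ z + dotp (ρ t) (x - z t) := by
  rw [cost_apply, sum_apply_update (fun s v => dotp (ρ s) v), cost_apply]
  simp only [dotp_eq_inner, inner_sub_right]

lemma frequently_lt_weightedUtility {w : ι → ℝ} {u : Vec L → ℝ} (hu : LocallyNonsatiatedNN u)
    {t : ι} (ht : 0 < w t) {z : ι → Vec L} (hz : z ∈ nonnegStreams) :
    ∃ᶠ z' in 𝓝 z, z' ∈ nonnegStreams ∧ weightedUtility w u z < weightedUtility w u z' := by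
  have hupd : Tendsto (Function.update z t) (𝓝 (z t)) (𝓝 z) := by
    simpa using ((by fun_prop : Continuous (Function.update z t)).tendsto (z t))
  refine hupd.frequently ((hu.frequently_lt (hz t)).mono fun x ⟨hx, hlt⟩ =>
    ⟨update_mem_nonnegStreams hz hx t, ?_⟩)
  rw [weightedUtility_update]
  nlinarith

lemma Supergrad.of_le_lagrangian {w : ι → ℝ} {u : Vec L → ℝ} {ρ c : ι → Vec L} {μ : ℝ}
    (hμ : 0 < μ) {t : ι} (ht : 0 < w t) (hc : c ∈ nonnegStreams)
    (hlag : ∀ z ∈ nonnegStreams,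
      weightedUtility w u z ≤ weightedUtility w u c + μ * (cost ρ z - cost ρ c)) :
    Supergrad (fun x => u x / μ) (c t) ((w t)⁻¹ • ρ t) := by
  intro x hx
  have := hlag _ (update_mem_nonnegStreams hc hx.1 t)
  rw [weightedUtility_update, cost_update] at this
  simp only [dotp_eq_inner, real_inner_smul_left] at this ⊢
  rw [div_sub_div_same, div_le_iff₀ hμ, inv_mul_eq_div, div_mul_eq_mul_div, le_div_iff₀ ht]
  linarith

end Streams

section Rationalization

variable {L T : ℕ}

lemma Dfac_pos {r : ℕ → ℝ} {t : ℕ} (hr : ∀ i, 1 ≤ i → i ≤ t → -1 < r i) : 0 < Dfac r t :=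
  Finset.prod_pos fun i hi => by
    have := hr i (Finset.mem_Icc.1 hi).1 (Finset.mem_Icc.1 hi).2
    linarith

lemma effP_pos {r : ℕ → ℝ} {p : Fin (T + 1) → Vec L} {t : Fin (T + 1)} (hD : 0 < Dfac r t)
    (hp : PosV (p t)) : PosV (effP r p t) := fun j => by
  simpa [effP] using mul_pos (inv_pos.2 hD) (hp j)

lemma Supergrad.smul_sub_le {u : Vec L → ℝ} {c ξ ρ z : Vec L} {s : ℝ} (h : Supergrad u c ξ)
    (hu : ContinuousNN u) (hc : ConsV c) (hz : NonnegV z) (hs : 0 ≤ s)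
    (hle : ∀ j, s * ξ j ≤ ρ j) (heq : ∀ j, c j ≠ 0 → s * ξ j = ρ j) :
    s * (u z - u c) ≤ dotp ρ (z - c) := by
  calc s * (u z - u c) ≤ s * dotp ξ (z - c) :=
        mul_le_mul_of_nonneg_left (h.sub_le_of_nonneg hu hc hz) hs
    _ = dotp (s • ξ) (z - c) := by simp only [dotp_eq_inner, real_inner_smul_left]
    _ ≤ dotp ρ (z - c) := Finset.sum_le_sum fun j _ => by
        rcases eq_or_ne (c j) 0 with hcj | hcj
        · simpa [hcj] using mul_le_mul_of_nonneg_right (hle j) (hz j)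
        · simp [heq j hcj]

lemma exists_income_budget {r : ℕ → ℝ} (hD : ∀ t : Fin (T + 1), 0 < Dfac r t) {W : ℝ}
    (hW : 0 < W) : ∃ y : Fin (T + 1) → ℝ, ∃ a₀ : ℝ, (∀ t, 0 < y t) ∧ 0 ≤ a₀ ∧
      W = (∑ t : Fin (T + 1), if t = 0 then 0 else y t / Dfac r (t : ℕ)) + a₀ := by
  set q := W / (T + 1)
  refine ⟨fun t => Dfac r t * q, _, fun t => mul_pos (hD t) (by positivity), sub_nonneg.2 ?_,
    (add_sub_cancel _ W).symm⟩
  calc (∑ t : Fin (T + 1), if t = 0 then 0 else Dfac r t * q / Dfac r t)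
      ≤ ∑ _t : Fin (T + 1), q := Finset.sum_le_sum fun t _ => by
        split_ifs
        · positivity
        · rw [mul_div_cancel_left₀ _ (hD t).ne']
    _ = W := by
        simp only [Finset.sum_const, Finset.card_univ, Fintype.card_fin, nsmul_eq_mul, q]
        field_simp
        push_cast
        ring

theorem EDRat.of_supergrad {r : ℕ → ℝ} {p c : Fin (T + 1) → Vec L}
    (hD : ∀ t : Fin (T + 1), 0 < Dfac r t) (hp : ∀ t, PosV (p t)) (hc : ∀ t, ConsV (c t))
    {u : Vec L → ℝ} {d : ℝ} (hu : NiceUtility u) (hd0 : 0 < d) (hd1 : d ≤ 1)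
    (hξ : ∀ t, ∃ ξ : Vec L, Supergrad u (c t) ξ ∧
      (∀ j, d ^ (t : ℕ) * ξ j ≤ effP r p t j) ∧
      (∀ j, c t j ≠ 0 → d ^ (t : ℕ) * ξ j = effP r p t j)) :
    EDRat r p c := by
  have hW := cost_pos (fun t => effP_pos (hD t) (hp t)) hc
  rw [cost_apply] at hW
  obtain ⟨y, a₀, hy, ha₀, hbud⟩ := exists_income_budget hD hW
  refine ⟨u, d, y, a₀, hu, hd0, hd1, hy, ha₀, hbud, fun z hz hzbud => ?_⟩
  have hperiod (t : Fin (T + 1)) : d ^ (t : ℕ) * (u (z t) - u (c t)) ≤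
      dotp (effP r p t) (z t - c t) := by
    obtain ⟨ξ, hsg, hle, heq⟩ := hξ t
    exact hsg.smul_sub_le hu.2.2 (hc t) (hz t) (pow_nonneg hd0.le _) hle heq
  have hsum := Finset.sum_le_sum fun t (_ : t ∈ Finset.univ) => hperiod t
  simp only [dotp_eq_inner, inner_sub_right, mul_sub, Finset.sum_sub_distrib] at hsum hzbud hbud
  linarith

theorem EDRat.exists_supergrad {r : ℕ → ℝ} {p c : Fin (T + 1) → Vec L}
    (hρ : ∀ t, PosV (effP r p t)) (hc : ∀ t, ConsV (c t)) (h : EDRat r p c) :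
    ∃ u : Vec L → ℝ, ∃ d : ℝ, NiceUtility u ∧ 0 < d ∧ d ≤ 1 ∧
      ∀ t, ∃ ξ : Vec L, Supergrad u (c t) ξ ∧
        (∀ j, d ^ (t : ℕ) * ξ j ≤ effP r p t j) ∧
        (∀ j, c t j ≠ 0 → d ^ (t : ℕ) * ξ j = effP r p t j) := by
  obtain ⟨u, d, y, a₀, hu, hd0, hd1, -, -, hbud, hopt⟩ := h
  set ρ := effP r p
  set U := weightedUtility (fun t : Fin (T + 1) => d ^ (t : ℕ)) u
  have hcD : c ∈ nonnegStreams := fun t => (hc t).1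
  have hmax : ∀ z ∈ nonnegStreams, cost ρ z = cost ρ c → U z ≤ U c := fun z hz hzc =>
    hopt z hz (by rw [← cost_apply, hzc, cost_apply, hbud])
  have hns : ∀ z ∈ nonnegStreams, ∃ᶠ z' in 𝓝 z, z' ∈ nonnegStreams ∧ U z < U z' :=
    fun z hz => frequently_lt_weightedUtility hu.2.1 (t := 0) (by simp) hz
  -- `c` also maximizes `U` on `cost ≤ W`, so any improvement on `c` costs more than `W`.
  have habove : ∃ z ∈ nonnegStreams, cost ρ c < cost ρ z ∧ U c < U z := by
    obtain ⟨z, hz, hzc, hzmax⟩ := exists_budget_exhausting_maximizer (isCompact_budgetSet hρ _)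
      ⟨c, hcD, le_rfl⟩ ((continuousOn_weightedUtility _ hu.2.2).mono fun _ hz => hz.1)
      (cost ρ).continuous hns
    obtain ⟨z', hz', hlt⟩ := (hns c hcD).exists
    refine ⟨z', hz', lt_of_not_ge fun hle => ?_, hlt⟩
    exact ((hzmax z' hz' hle).trans (hmax z hz hzc)).not_gt hlt
  obtain ⟨μ, hμ, hlag⟩ := (concaveOn_weightedUtility (fun t => pow_nonneg hd0.le _)
    hu.1.concaveOn).exists_lagrange_multiplier (C := (cost ρ).toLinearMap) hmax
    ⟨0, zero_mem_nonnegStreams, by simpa using cost_pos hρ hc⟩ habove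
  have hdt (t : Fin (T + 1)) : d ^ (t : ℕ) ≠ 0 := pow_ne_zero _ hd0.ne'
  refine ⟨fun x => u x / μ, d, hu.div_const hμ, hd0, hd1, fun t => ⟨(d ^ (t : ℕ))⁻¹ • ρ t,
    Supergrad.of_le_lagrangian (w := fun t : Fin (T + 1) => d ^ (t : ℕ)) hμ (pow_pos hd0 _) hcD
      hlag, fun j => ?_, fun j _ => ?_⟩⟩ <;>
  simp [hdt]

end Rationalization

/-- the array (p_t, r_t, c_t) is ED-rationalizable iff there exist a concave,
locally nonsatiated, continuous u, a discount factor d ∈ (0,1], and for each t a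
supergradient ξ_t ∈ ∂u(c_t) with d^t ξ_{t,j} ≤ ρ_{t,j} for all j, with equality
whenever c_{t,j} ≠ 0. -/
theorem stmt_1 {L T : ℕ} (p c : Fin (T + 1) → Vec L) (r : ℕ → ℝ)
    (hr : ∀ i, 1 ≤ i → i ≤ T → -1 < r i)
    (hp : ∀ t, PosV (p t)) (hc : ∀ t, ConsV (c t)) :
    EDRat r p c ↔
      ∃ u : Vec L → ℝ, ∃ d : ℝ, NiceUtility u ∧ 0 < d ∧ d ≤ 1 ∧
        ∀ t, ∃ ξ : Vec L, Supergrad u (c t) ξ ∧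
          (∀ j, d ^ (t : ℕ) * ξ j ≤ effP r p t j) ∧
          (∀ j, c t j ≠ 0 → d ^ (t : ℕ) * ξ j = effP r p t j) := by
  have hD (t : Fin (T + 1)) : 0 < Dfac r t :=
    Dfac_pos fun i hi hit => hr i hi (hit.trans t.is_le)
  refine ⟨EDRat.exists_supergrad (fun t => effP_pos (hD t) (hp t)) hc, ?_⟩
  rintro ⟨u, d, hu, hd0, hd1, hξ⟩
  exact EDRat.of_supergrad hD hp hc hu hd0 hd1 hξ

end
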